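/- arXiv:2411.17405 — 2 statements merged into one kernel-verified Lean document; each statement's English description precedes it below -/
import Mathlib

section
/- (Uniform positive definiteness of the two-dimensional elasticity tensor.) There exists a constant c_e = c_e(ω, θ, λ, μ) > 0 such that for every y ∈ ω̄ and every symmetric 2×2 real matrix (t_{αβ}), c_e · Σ_{α,β} |t_{αβ}|² ≤ a^{αβστ}(y) t_{στ} t_{αβ}, where a^{αβστ} := (4λμ/(λ+2μ)) a^{αβ} a^{στ} + 2μ (a^{ασ} a^{βτ} + a^{ατ} a^{βσ}). -/
open MeasureTheory Real


noncomputable section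

/-- The plane `ℝ²` with its Euclidean structure. -/
abbrev E2 := EuclideanSpace ℝ (Fin 2)

/-- The space `ℝ³` with its Euclidean structure. -/
abbrev E3 := EuclideanSpace ℝ (Fin 3)

/-- Partial derivative `∂_α` of a scalar field on `ℝ²`. -/
def pd (α : Fin 2) (u : E2 → ℝ) (y : E2) : ℝ :=
  fderiv ℝ u y (EuclideanSpace.single α (1:ℝ))

/-- Partial derivative `∂_α` of an `ℝ³`-valued field on `ℝ²`. -/
def pdv (α : Fin 2) (u : E2 → E3) (y : E2) : E3 :=
  fderiv ℝ u y (EuclideanSpace.single α (1:ℝ))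

/-- Euclidean inner product on `ℝ³`. -/
def dot3 (u v : E3) : ℝ := ∑ i : Fin 3, u i * v i

/-- Cross (vector) product on `ℝ³`. -/
def cross3 (u v : E3) : E3 :=
  (WithLp.equiv 2 (Fin 3 → ℝ)).symm
    ![u 1 * v 2 - u 2 * v 1, u 2 * v 0 - u 0 * v 2, u 0 * v 1 - u 1 * v 0]

/-- Covariant basis vectors `a_α := ∂_α θ`. -/
def acov (θ : E2 → E3) (α : Fin 2) (y : E2) : E3 := pdv α θ y

/-- The unit normal vector field `a₃ := (a₁ ∧ a₂)/|a₁ ∧ a₂|`. -/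
def a3 (θ : E2 → E3) (y : E2) : E3 :=
  ‖cross3 (acov θ 0 y) (acov θ 1 y)‖⁻¹ • cross3 (acov θ 0 y) (acov θ 1 y)

/-- Covariant components `a_{αβ}` of the first fundamental form. -/
def afirst (θ : E2 → E3) (y : E2) : Matrix (Fin 2) (Fin 2) ℝ :=
  Matrix.of fun α β => dot3 (acov θ α y) (acov θ β y)

/-- Contravariant components `a^{αβ}`, the inverse matrix of `(a_{αβ})`. -/
def ainv (θ : E2 → E3) (y : E2) : Matrix (Fin 2) (Fin 2) ℝ := (afirst θ y)⁻¹

/-- Tangential contravariant basis vectors `a^σ = a^{στ} a_τ`. -/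
def acontra (θ : E2 → E3) (σ : Fin 2) (y : E2) : E3 :=
  ∑ τ : Fin 2, ainv θ y σ τ • acov θ τ y

/-- Covariant components of the second fundamental form, `b_{αβ} := a₃ ⋅ ∂_α a_β`. -/
def bcov (θ : E2 → E3) (α β : Fin 2) (y : E2) : ℝ :=
  dot3 (a3 θ y) (pdv α (acov θ β) y)

/-- Mixed components of the second fundamental form, `b^α_β := a^{ασ} b_{σβ}`. -/
def bmix (θ : E2 → E3) (α β : Fin 2) (y : E2) : ℝ :=
  ∑ σ : Fin 2, ainv θ y α σ * bcov θ σ β y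

/-- Christoffel symbols `Γ^σ_{αβ} := a^σ ⋅ ∂_β a_α`. -/
def Γs (θ : E2 → E3) (σ α β : Fin 2) (y : E2) : ℝ :=
  dot3 (acontra θ σ y) (pdv β (acov θ α) y)

/-- `θ` is an immersion on `s`: `a₁(y), a₂(y)` are linearly independent for `y ∈ s`. -/
def IsImmersionOn (θ : E2 → E3) (s : Set E2) : Prop :=
  ∀ y ∈ s, LinearIndependent ℝ ![acov θ 0 y, acov θ 1 y]

/-- The `L²(ω)` norm. -/
def L2 (ω : Set E2) (u : E2 → ℝ) : ℝ := Real.sqrt (∫ y in ω, u y ^ 2)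

/-- The `L⁴(ω)` norm. -/
def L4 (ω : Set E2) (u : E2 → ℝ) : ℝ := (∫ y in ω, u y ^ 4) ^ ((1:ℝ)/4)

/-- The `W^{1,2}(ω)` norm. -/
def W12 (ω : Set E2) (u : E2 → ℝ) : ℝ :=
  Real.sqrt (L2 ω u ^ 2 + ∑ α : Fin 2, L2 ω (pd α u) ^ 2)

/-- The `W^{2,2}(ω)` norm. -/
def W22 (ω : Set E2) (u : E2 → ℝ) : ℝ :=
  Real.sqrt (W12 ω u ^ 2 +
    ∑ α : Fin 2, ∑ β : Fin 2, L2 ω (fun y => pd α (fun x => pd β u x) y) ^ 2)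

/-- Covariant components of the linearized change of metric tensor `γ_{αβ}(η)`,
for a displacement field with components `v 0, v 1` (tangential) and `v 2` (normal). -/
def γlin (θ : E2 → E3) (v : Fin 3 → E2 → ℝ) (α β : Fin 2) (y : E2) : ℝ :=
  (pd α (v β.castSucc) y + pd β (v α.castSucc) y) / 2
    - ∑ σ : Fin 2, Γs θ σ α β y * v σ.castSucc y
    - bcov θ α β y * v 2 y

/-- The rotation-type fields `φ_β(η) := ∂_β η₃ − b^σ_β η_σ`. -/
def φrot (θ : E2 → E3) (v : Fin 3 → E2 → ℝ) (β : Fin 2) (y : E2) : ℝ :=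
  pd β (v 2) y - ∑ σ : Fin 2, bmix θ σ β y * v σ.castSucc y

/-- Modified change of metric tensor `G^{BS}_{αβ}(η) := γ_{αβ}(η) + ½ φ_α(η) φ_β(η)`. -/
def GBS (θ : E2 → E3) (v : Fin 3 → E2 → ℝ) (α β : Fin 2) (y : E2) : ℝ :=
  γlin θ v α β y + (φrot θ v α y * φrot θ v β y) / 2

/-- Modified linearized change of curvature tensor `ρ^{BS}_{αβ}(η)`. -/
def ρBS (θ : E2 → E3) (v : Fin 3 → E2 → ℝ) (α β : Fin 2) (y : E2) : ℝ :=
  ((pd β (φrot θ v α) y - ∑ τ : Fin 2, Γs θ τ α β y * φrot θ v τ y)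
    + (pd α (φrot θ v β) y - ∑ τ : Fin 2, Γs θ τ β α y * φrot θ v τ y)) / 2

/-- Smooth and compactly supported inside `ω`. -/
def SmoothCptIn (ω : Set E2) (u : E2 → ℝ) : Prop :=
  ContDiff ℝ (⊤ : ℕ∞) u ∧ HasCompactSupport u ∧ tsupport u ⊆ ω

end

/-
The elasticity form splits as `a^{αβστ} t_{στ} t_{αβ} = k (tr (A t))² + 4μ tr (A t A t)` with
`A = (a_{αβ})⁻¹` and `k = 4λμ/(λ+2μ) ≥ 0`. Every eigenvalue of the positive definite matrix
`(a_{αβ})` is at most its trace, so `A ≥ (tr a)⁻¹ · 1`, and writing `A = P + m · 1` with `P ≥ 0`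
gives `tr (A t A t) ≥ m² Σ t_{αβ}²`, since the trace of a product of two positive
semidefinite matrices is nonnegative. Finally `y ↦ tr (a_{αβ}(y))` is continuous, hence bounded
on the compact set `ω̄`.
-/

open scoped MatrixOrder ComplexOrder

namespace Matrix

variable {n : Type*} [Fintype n]

lemma PosSemidef.trace_mul_nonneg {𝕜 : Type*} [RCLike 𝕜] {P Q : Matrix n n 𝕜}
    (hP : P.PosSemidef) (hQ : Q.PosSemidef) : 0 ≤ (P * Q).trace := by
  classical
  obtain ⟨S, rfl⟩ := CStarAlgebra.nonneg_iff_eq_star_mul_self.mp hP.nonneg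
  rw [mul_assoc, trace_mul_comm, mul_assoc, ← mul_assoc, star_eq_conjTranspose]
  exact (hQ.mul_mul_conjTranspose_same S).trace_nonneg

lemma sq_mul_trace_mul_self_le [DecidableEq n] {A t : Matrix n n ℝ} {m : ℝ} (hm : 0 ≤ m)
    (hA : m • (1 : Matrix n n ℝ) ≤ A) (ht : t.IsSymm) :
    m ^ 2 * (t * t).trace ≤ (A * t * A * t).trace := by
  obtain ⟨P, hP, rfl⟩ : ∃ P, P.PosSemidef ∧ A = P + m • 1 :=
    ⟨A - m • 1, hA, (sub_add_cancel A _).symm⟩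
  have htt : (t * t).PosSemidef := by
    simpa [conjTranspose_eq_transpose_of_trivial, ht.eq] using posSemidef_self_mul_conjTranspose t
  have htPt : (t * P * t).PosSemidef := by
    simpa [conjTranspose_eq_transpose_of_trivial, ht.eq] using hP.conjTranspose_mul_mul_same t
  have hexpand : ((P + m • 1) * t * (P + m • 1) * t).trace =
      (P * (t * P * t)).trace + 2 * m * (P * (t * t)).trace + m ^ 2 * (t * t).trace := by
    simp only [add_mul, mul_add, smul_mul, mul_smul_comm, one_mul, trace_add, trace_smul,
      smul_eq_mul, mul_assoc]
    rw [trace_mul_comm t (P * t), mul_assoc]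
    ring
  rw [hexpand]
  nlinarith [hP.trace_mul_nonneg htPt, hP.trace_mul_nonneg htt]

lemma PosSemidef.le_trace_of_mem_spectrum [DecidableEq n] {G : Matrix n n ℝ}
    (hG : G.PosSemidef) {x : ℝ} (hx : x ∈ spectrum ℝ G) : x ≤ G.trace := by
  obtain ⟨i, rfl⟩ := hG.isHermitian.spectrum_real_eq_range_eigenvalues ▸ hx
  rw [hG.isHermitian.trace_eq_sum_eigenvalues]
  exact Finset.single_le_sum (fun j _ => hG.eigenvalues_nonneg j) (Finset.mem_univ i)

lemma PosDef.inv_smul_one_le_inv [DecidableEq n] {G : Matrix n n ℝ} (hG : G.PosDef) {M : ℝ}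
    (hM : G.trace ≤ M) : M⁻¹ • (1 : Matrix n n ℝ) ≤ G⁻¹ := by
  have hspec : ∀ x ∈ spectrum ℝ G, 0 < x := fun x hx => by
    obtain ⟨i, rfl⟩ := hG.isHermitian.spectrum_real_eq_range_eigenvalues ▸ hx
    exact hG.eigenvalues_pos i
  rw [nonsing_inv_eq_ringInverse, ← Algebra.algebraMap_eq_smul_one,
    ← cfc_ringInverse_id (R := ℝ) (a := G) hG.isUnit hG.isHermitian.isSelfAdjoint]
  refine algebraMap_le_cfc _ _ _ (fun x hx => ?_)
    (continuousOn_inv₀.mono fun x hx => (hspec x hx).ne')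
  exact inv_anti₀ (hspec x hx) ((hG.posSemidef.le_trace_of_mem_spectrum hx).trans hM)

lemma trace_mul_self_eq_sum_sq {t : Matrix n n ℝ} (ht : t.IsSymm) :
    (t * t).trace = ∑ i, ∑ j, t i j ^ 2 := by
  simp only [trace, diag, mul_apply, sq]
  exact Finset.sum_congr rfl fun i _ => Finset.sum_congr rfl fun j _ => by rw [ht.apply i j]

lemma trace_mul_mul_mul_mul_eq_sum {A t : Matrix n n ℝ} (hA : A.IsSymm) (ht : t.IsSymm) :
    (A * t * A * t).trace = ∑ α, ∑ β, ∑ σ, ∑ τ, A α σ * A β τ * t σ τ * t α β := by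
  simp only [trace, diag, mul_apply, Finset.sum_mul]
  refine Finset.sum_congr rfl fun α _ => Finset.sum_congr rfl fun β _ => ?_
  rw [Finset.sum_comm]
  refine Finset.sum_congr rfl fun σ _ => Finset.sum_congr rfl fun τ _ => ?_
  rw [hA.apply β τ, ht.apply α β]
  ring

lemma trace_mul_sq_eq_sum {A t : Matrix n n ℝ} (ht : t.IsSymm) :
    (A * t).trace ^ 2 = ∑ α, ∑ β, ∑ σ, ∑ τ, A α β * A σ τ * t σ τ * t α β := by
  have htrace : (A * t).trace = ∑ α, ∑ β, A α β * t α β := by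
    simp only [trace, diag, mul_apply]
    exact Finset.sum_congr rfl fun α _ => Finset.sum_congr rfl fun β _ => by rw [ht.apply α β]
  rw [htrace, sq, Finset.sum_mul_sum]
  refine Finset.sum_congr rfl fun α _ => ?_
  rw [Finset.sum_comm]
  simp only [Finset.sum_mul_sum]
  refine Finset.sum_congr rfl fun β _ => Finset.sum_congr rfl fun σ _ =>
    Finset.sum_congr rfl fun τ _ => ?_
  ring

lemma sum_elasticity_eq {A t : Matrix n n ℝ} (hA : A.IsSymm) (ht : t.IsSymm) (k μ : ℝ) :
    ∑ α, ∑ β, ∑ σ, ∑ τ, (k * A α β * A σ τ + 2 * μ * (A α σ * A β τ + A α τ * A β σ))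
      * t σ τ * t α β = k * (A * t).trace ^ 2 + 4 * μ * (A * t * A * t).trace := by
  have hswap : ∑ α, ∑ β, ∑ σ, ∑ τ, A α τ * A β σ * t σ τ * t α β
      = ∑ α, ∑ β, ∑ σ, ∑ τ, A α σ * A β τ * t σ τ * t α β := by
    refine Finset.sum_congr rfl fun α _ => Finset.sum_congr rfl fun β _ => ?_
    rw [Finset.sum_comm]
    refine Finset.sum_congr rfl fun σ _ => Finset.sum_congr rfl fun τ _ => ?_
    rw [ht.apply σ τ]
  rw [trace_mul_sq_eq_sum ht, trace_mul_mul_mul_mul_eq_sum hA ht,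
    show (4 : ℝ) * μ = 2 * μ + 2 * μ by ring, add_mul, ← hswap]
  nth_rw 2 [hswap]
  simp only [Finset.mul_sum, ← Finset.sum_add_distrib]
  refine Finset.sum_congr rfl fun α _ => Finset.sum_congr rfl fun β _ => ?_
  refine Finset.sum_congr rfl fun σ _ => Finset.sum_congr rfl fun τ _ => ?_
  ring

end Matrix

lemma dot3_eq_inner (u v : E3) : dot3 u v = inner ℝ u v := by
  simp [dot3, PiLp.inner_apply, mul_comm]

lemma afirst_eq_gram (θ : E2 → E3) (y : E2) : afirst θ y = Matrix.gram ℝ (acov θ · y) := by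
  ext α β
  simp [afirst, dot3_eq_inner]

lemma continuous_trace_afirst {θ : E2 → E3} (hθ : ContDiff ℝ 1 θ) :
    Continuous fun y => (afirst θ y).trace := by
  have hacov : ∀ α, Continuous (acov θ α) := fun α =>
    (hθ.continuous_fderiv one_ne_zero).clm_apply continuous_const
  simp only [Matrix.trace, Matrix.diag, afirst_eq_gram, Matrix.gram_apply]
  exact continuous_finsetSum _ fun α _ => (hacov α).inner (hacov α)

lemma afirst_posDef {θ : E2 → E3} {y : E2}
    (h : LinearIndependent ℝ ![acov θ 0 y, acov θ 1 y]) : (afirst θ y).PosDef := by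
  have hv : (acov θ · y) = ![acov θ 0 y, acov θ 1 y] := by
    ext1 α
    fin_cases α <;> rfl
  rw [afirst_eq_gram, hv]
  exact Matrix.posDef_gram_of_linearIndependent h

theorem elasticity_tensor_uniformly_positive_definite_general
    (ω : Set E2) (hbd : Bornology.IsBounded ω)
    (θ : E2 → E3) (hθ : ContDiff ℝ 2 θ) (himm : IsImmersionOn θ (closure ω))
    (lam mu : ℝ) (hlam : 0 ≤ lam) (hmu : 0 < mu) :
    ∃ c : ℝ, 0 < c ∧ ∀ y ∈ closure ω, ∀ t : Matrix (Fin 2) (Fin 2) ℝ, t.IsSymm →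
      c * ∑ α : Fin 2, ∑ β : Fin 2, |t α β| ^ 2 ≤
        ∑ α : Fin 2, ∑ β : Fin 2, ∑ σ : Fin 2, ∑ τ : Fin 2,
          ((4 * lam * mu / (lam + 2 * mu)) * ainv θ y α β * ainv θ y σ τ
            + 2 * mu * (ainv θ y α σ * ainv θ y β τ + ainv θ y α τ * ainv θ y β σ))
            * t σ τ * t α β := by
  obtain ⟨M, hM1, hM⟩ := (hbd.isCompact_closure.bddAbove_image
    (continuous_trace_afirst (hθ.of_le one_le_two)).continuousOn).exists_ge 1
  refine ⟨4 * mu / M ^ 2, by positivity, fun y hy t ht => ?_⟩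
  have hG := afirst_posDef (himm y hy)
  have hA : (ainv θ y).IsSymm := Matrix.isHermitian_iff_isSymm.mp hG.inv.isHermitian
  have hbound : (t * t).trace / M ^ 2 ≤ (ainv θ y * t * ainv θ y * t).trace := by
    simpa only [ainv, inv_pow, div_eq_inv_mul] using Matrix.sq_mul_trace_mul_self_le
      (by positivity) (hG.inv_smul_one_le_inv (hM _ (Set.mem_image_of_mem _ hy))) ht
  have hk : 0 ≤ 4 * lam * mu / (lam + 2 * mu) := by positivity
  simp only [sq_abs]
  rw [Matrix.sum_elasticity_eq hA ht, ← Matrix.trace_mul_self_eq_sum_sq ht]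
  calc 4 * mu / M ^ 2 * (t * t).trace = 4 * mu * ((t * t).trace / M ^ 2) := by ring
    _ ≤ 4 * mu * (ainv θ y * t * ainv θ y * t).trace := by gcongr
    _ ≤ _ := le_add_of_nonneg_left (mul_nonneg hk (sq_nonneg _))

/-- (Uniform positive definiteness of the two-dimensional elasticity tensor.)
There is `c_e = c_e(ω, θ, λ, μ) > 0` such that for all `y ∈ ω̄` and all symmetric 2×2
matrices `(t_{αβ})`: `c_e Σ_{α,β} |t_{αβ}|² ≤ a^{αβστ}(y) t_{στ} t_{αβ}`. -/
theorem elasticity_tensor_uniformly_positive_definite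
    (ω : Set E2) (hω : IsOpen ω) (hbd : Bornology.IsBounded ω) (hconn : IsConnected ω)
    (θ : E2 → E3) (hθ : ContDiff ℝ 2 θ) (himm : IsImmersionOn θ (closure ω))
    (lam mu : ℝ) (hlam : 0 ≤ lam) (hmu : 0 < mu) :
    ∃ c : ℝ, 0 < c ∧ ∀ y ∈ closure ω, ∀ t : Matrix (Fin 2) (Fin 2) ℝ, t.IsSymm →
      c * ∑ α : Fin 2, ∑ β : Fin 2, |t α β| ^ 2 ≤
        ∑ α : Fin 2, ∑ β : Fin 2, ∑ σ : Fin 2, ∑ τ : Fin 2,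
          ((4 * lam * mu / (lam + 2 * mu)) * ainv θ y α β * ainv θ y σ τ
            + 2 * mu * (ainv θ y α σ * ainv θ y β τ + ainv θ y α τ * ainv θ y β σ))
            * t σ τ * t α β :=
  elasticity_tensor_uniformly_positive_definite_general ω hbd θ hθ himm lam mu hlam hmu
end

section
/- (Pointwise coercivity of the elasticity tensor with explicit constant.) Let A = (A^{αβ}) be a symmetric positive definite 2×2 real matrix and suppose μ₀ > 0 is such that xᵀAx ≥ μ₀|x|² for all x ∈ ℝ². Let λ ≥ 0 and μ > 0 and define a^{αβστ} := (4λμ/(λ+2μ)) A^{αβ} A^{στ} + 2μ (A^{ασ} A^{βτ} + A^{ατ} A^{βσ}). Then for every symmetric 2×2 real matrix (t_{αβ}), a^{αβστ} t_{στ} t_{αβ} ≥ 4μ μ₀² Σ_{α,β} |t_{αβ}|². -/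
open MeasureTheory Real


/-!
Contracting with a symmetric `t` turns the tensor into
`(4λμ/(λ+2μ)) (tr At)² + 4μ tr(AtAt)`, so only `tr(AtAt) ≥ μ₀² tr(t²)` remains. The
hypothesis on `A` says that `A - μ₀ I` is positive semidefinite, and the trace of a product of two positive
semidefinite matrices is nonnegative. Applied to `tAt` and to `t²` this gives
`tr(A · tAt) ≥ μ₀ tr(tAt) = μ₀ tr(A t²) ≥ μ₀² tr(t²)`.
-/

open Matrix
open scoped MatrixOrder ComplexOrder

section

variable {n : Type*} [Fintype n]

theorem Matrix.PosSemidef.trace_mul_nonneg_s6 {𝕜 : Type*} [RCLike 𝕜]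
    {P Q : Matrix n n 𝕜} (hP : P.PosSemidef) (hQ : Q.PosSemidef) : 0 ≤ (P * Q).trace := by
  classical
  obtain ⟨B, rfl⟩ := CStarAlgebra.nonneg_iff_eq_star_mul_self.mp hP.nonneg
  rw [star_eq_conjTranspose, Matrix.mul_assoc, trace_mul_comm]
  exact (hQ.mul_mul_conjTranspose_same B).trace_nonneg

theorem Matrix.posSemidef_sub_smul_one_of_forall_le [DecidableEq n] {A : Matrix n n ℝ} {c : ℝ}
    (hA : A.IsHermitian) (h : ∀ x : n → ℝ, c * ∑ i, |x i| ^ 2 ≤ ∑ α, ∑ β, x α * A α β * x β) :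
    (A - c • 1).PosSemidef := by
  refine .of_dotProduct_mulVec_nonneg (hA.sub (isHermitian_one.smul (.all c))) fun x => ?_
  rw [star_trivial, sub_mulVec, smul_mulVec, one_mulVec, dotProduct_sub, dotProduct_smul,
    smul_eq_mul, sub_nonneg]
  simpa [dotProduct, mulVec, Finset.mul_sum, mul_assoc, mul_left_comm, sq_abs, sq] using h x

theorem Matrix.mul_trace_le_trace_mul_of_posSemidef_sub_smul_one [DecidableEq n]
    {A Q : Matrix n n ℝ} {c : ℝ} (hA : (A - c • 1).PosSemidef) (hQ : Q.PosSemidef) :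
    c * Q.trace ≤ (A * Q).trace := by
  have := hA.trace_mul_nonneg_s6 hQ
  rwa [Matrix.sub_mul, trace_sub, smul_mul, Matrix.one_mul, trace_smul, smul_eq_mul,
    sub_nonneg] at this

theorem Matrix.IsSymm.sq_mul_trace_mul_self_le [DecidableEq n] {A t : Matrix n n ℝ} {c : ℝ}
    (hc : 0 ≤ c) (hA : (A - c • 1).PosSemidef) (ht : t.IsSymm) :
    c ^ 2 * (t * t).trace ≤ (A * t * A * t).trace := by
  have hApsd : A.PosSemidef := by
    simpa using hA.add (PosSemidef.one.smul hc)
  have htt : (t * t).PosSemidef := by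
    simpa [conjTranspose_eq_transpose_of_trivial, ht.eq] using posSemidef_conjTranspose_mul_self t
  have htAt : (t * A * t).PosSemidef := by
    simpa [conjTranspose_eq_transpose_of_trivial, ht.eq] using hApsd.conjTranspose_mul_mul_same t
  calc c ^ 2 * (t * t).trace = c * (c * (t * t).trace) := by ring
    _ ≤ c * (A * (t * t)).trace :=
      mul_le_mul_of_nonneg_left (mul_trace_le_trace_mul_of_posSemidef_sub_smul_one hA htt) hc
    _ = c * (t * A * t).trace := by rw [← Matrix.mul_assoc, trace_mul_comm, ← Matrix.mul_assoc]
    _ ≤ (A * (t * A * t)).trace := mul_trace_le_trace_mul_of_posSemidef_sub_smul_one hA htAt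
    _ = (A * t * A * t).trace := by simp only [Matrix.mul_assoc]

theorem Matrix.IsSymm.sum_sq_abs_eq_trace_mul_self {t : Matrix n n ℝ} (ht : t.IsSymm) :
    ∑ α, ∑ β, |t α β| ^ 2 = (t * t).trace := by
  simp only [trace, diag, mul_apply, ht.apply, sq, abs_mul_abs_self]

theorem Matrix.IsSymm.sum_mul_mul_eq_trace_sq {A t : Matrix n n ℝ} (ht : t.IsSymm) :
    ∑ α, ∑ β, ∑ σ, ∑ τ, A α β * A σ τ * t σ τ * t α β = (A * t).trace ^ 2 := by
  have : (A * t).trace = ∑ α, ∑ β, A α β * t α β := by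
    simp only [trace, diag, mul_apply, ht.apply]
  simp only [this, sq, Finset.sum_mul, Finset.mul_sum]
  refine Finset.sum_congr rfl fun α _ => Finset.sum_congr rfl fun β _ =>
    Finset.sum_congr rfl fun σ _ => Finset.sum_congr rfl fun τ _ => by ring

theorem Matrix.IsSymm.sum_mul_mul_eq_trace_mul_mul_mul {A t : Matrix n n ℝ} (hA : A.IsSymm)
    (ht : t.IsSymm) :
    ∑ α, ∑ β, ∑ σ, ∑ τ, A α σ * A β τ * t σ τ * t α β = (A * t * A * t).trace := by
  simp only [trace, diag, mul_apply, Finset.sum_mul]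
  refine Finset.sum_congr rfl fun α _ => Finset.sum_congr rfl fun β _ => ?_
  rw [Finset.sum_comm]
  refine Finset.sum_congr rfl fun σ _ => Finset.sum_congr rfl fun τ _ => ?_
  rw [hA.apply β σ, ht.apply α β]
  ring

theorem Matrix.IsSymm.sum_elasticity_contraction_eq {A t : Matrix n n ℝ} (hA : A.IsSymm)
    (ht : t.IsSymm) (c d : ℝ) :
    ∑ α, ∑ β, ∑ σ, ∑ τ,
        (c * A α β * A σ τ + d * (A α σ * A β τ + A α τ * A β σ)) * t σ τ * t α β =
      c * (A * t).trace ^ 2 + 2 * d * (A * t * A * t).trace := by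
  have hswap : ∑ α, ∑ β, ∑ σ, ∑ τ, A α τ * A β σ * t σ τ * t α β =
      ∑ α, ∑ β, ∑ σ, ∑ τ, A α σ * A β τ * t σ τ * t α β := by
    refine Finset.sum_congr rfl fun α _ => Finset.sum_congr rfl fun β _ => ?_
    rw [Finset.sum_comm]
    simp only [ht.apply]
  have hsplit : ∀ α β σ τ,
      (c * A α β * A σ τ + d * (A α σ * A β τ + A α τ * A β σ)) * t σ τ * t α β
        = c * (A α β * A σ τ * t σ τ * t α β) + d * (A α σ * A β τ * t σ τ * t α β)
          + d * (A α τ * A β σ * t σ τ * t α β) := fun _ _ _ _ => by ring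
  simp only [hsplit, Finset.sum_add_distrib, ← Finset.mul_sum, hswap,
    ht.sum_mul_mul_eq_trace_sq, hA.sum_mul_mul_eq_trace_mul_mul_mul ht]
  ring

end

/-- (Pointwise coercivity of the elasticity tensor with explicit constant.)
If `A` is symmetric positive definite with `xᵀAx ≥ μ₀|x|²`, `λ ≥ 0`, `μ > 0`, then for every
symmetric `t`: `a^{αβστ} t_{στ} t_{αβ} ≥ 4 μ μ₀² Σ_{α,β} |t_{αβ}|²`. -/
theorem elasticity_tensor_pointwise_coercive
    (A : Matrix (Fin 2) (Fin 2) ℝ) (hA : A.PosDef) (μ₀ : ℝ) (hμ₀ : 0 < μ₀)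
    (hAbound : ∀ x : Fin 2 → ℝ,
      μ₀ * ∑ i : Fin 2, |x i| ^ 2 ≤ ∑ α : Fin 2, ∑ β : Fin 2, x α * A α β * x β)
    (lam mu : ℝ) (hlam : 0 ≤ lam) (hmu : 0 < mu) :
    ∀ t : Matrix (Fin 2) (Fin 2) ℝ, t.IsSymm →
      4 * mu * μ₀ ^ 2 * ∑ α : Fin 2, ∑ β : Fin 2, |t α β| ^ 2 ≤
        ∑ α : Fin 2, ∑ β : Fin 2, ∑ σ : Fin 2, ∑ τ : Fin 2,
          ((4 * lam * mu / (lam + 2 * mu)) * A α β * A σ τ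
            + 2 * mu * (A α σ * A β τ + A α τ * A β σ)) * t σ τ * t α β := by
  intro t ht
  have hAsymm : A.IsSymm := isHermitian_iff_isSymm.mp hA.isHermitian
  have hAμ₀ := posSemidef_sub_smul_one_of_forall_le hA.isHermitian hAbound
  have hshear := mul_le_mul_of_nonneg_left (ht.sq_mul_trace_mul_self_le hμ₀.le hAμ₀)
    (by positivity : (0 : ℝ) ≤ 4 * mu)
  have hlame : 0 ≤ 4 * lam * mu / (lam + 2 * mu) * (A * t).trace ^ 2 := by positivity
  rw [hAsymm.sum_elasticity_contraction_eq ht, ht.sum_sq_abs_eq_trace_mul_self]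
  linarith
end
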